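/- arXiv:1711.02921 — 2 statements merged into one kernel-verified Lean document; each statement's English description precedes it below -/
import Mathlib

section
/- Define the δ-degree of a monomial z^k z̄^l (with k ≡ l mod n, n ≥ 3) by δ(z^k z̄^l) = |k−l|/n + min(k,l), which equals (k+l)/2 − ((n−2)/(2n))|k−l|. Then for any nonnegative integers k₁,l₁,k₂,l₂ (each pair resonant), the δ-degree of the Poisson-bracket monomial satisfies δ(z^{k₁+k₂−1} z̄^{l₁+l₂−1}) ≥ δ(z^{k₁} z̄^{l₁}) + δ(z^{k₂} z̄^{l₂}) − 1. -/
/-- δ-degree of a resonant monomial `z^k z̄^l`. -/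
noncomputable def deltaDeg (n k l : ℤ) : ℚ :=
  ((k : ℚ) + l) / 2 - (((n : ℚ) - 2) / (2 * n)) * |(k : ℚ) - l|

/-! Lowering both exponents by one lowers the δ-degree by exactly one, since `k - l` is unchanged;
and the δ-degree is superadditive, because its first term is additive while `|k - l|`, which
enters with the nonnegative weight `(n - 2) / (2n)`, is subadditive. -/

theorem deltaDeg_sub_one_sub_one (n k l : ℤ) :
    deltaDeg n (k - 1) (l - 1) = deltaDeg n k l - 1 := by
  unfold deltaDeg
  push_cast
  rw [show (k : ℚ) - 1 - (l - 1) = k - l by ring]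
  ring

theorem deltaDeg_add_le_deltaDeg_add {n : ℤ} (hn : 2 ≤ n) (k₁ l₁ k₂ l₂ : ℤ) :
    deltaDeg n k₁ l₁ + deltaDeg n k₂ l₂ ≤ deltaDeg n (k₁ + k₂) (l₁ + l₂) := by
  have hweight : 0 ≤ ((n : ℚ) - 2) / (2 * n) := by
    have hnq : (2 : ℚ) ≤ n := by exact_mod_cast hn
    exact div_nonneg (by linarith) (by linarith)
  have hsub : |(k₁ : ℚ) + k₂ - (l₁ + l₂)| ≤ |(k₁ : ℚ) - l₁| + |(k₂ : ℚ) - l₂| := by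
    rw [show (k₁ : ℚ) + k₂ - (l₁ + l₂) = (k₁ - l₁) + (k₂ - l₂) by ring]
    exact abs_add_le _ _
  unfold deltaDeg
  push_cast
  linarith [mul_le_mul_of_nonneg_left hsub hweight]

theorem stmt_1_general (n : ℤ) (hn : 3 ≤ n)
    (k₁ l₁ k₂ l₂ : ℤ) :
    deltaDeg n (k₁ + k₂ - 1) (l₁ + l₂ - 1) ≥
      deltaDeg n k₁ l₁ + deltaDeg n k₂ l₂ - 1 := by
  rw [deltaDeg_sub_one_sub_one]
  linarith [deltaDeg_add_le_deltaDeg_add (by omega : 2 ≤ n) k₁ l₁ k₂ l₂]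

/-- The δ-degree of the Poisson-bracket monomial satisfies
`δ(z^{k₁+k₂−1} z̄^{l₁+l₂−1}) ≥ δ(z^{k₁} z̄^{l₁}) + δ(z^{k₂} z̄^{l₂}) − 1`. -/
theorem stmt_1 (n : ℤ) (hn : 3 ≤ n)
    (k₁ l₁ k₂ l₂ : ℤ) (hk₁ : 0 ≤ k₁) (hl₁ : 0 ≤ l₁) (hk₂ : 0 ≤ k₂) (hl₂ : 0 ≤ l₂)
    (hres₁ : n ∣ (k₁ - l₁)) (hres₂ : n ∣ (k₂ - l₂))
    (hk : 1 ≤ k₁ + k₂) (hl : 1 ≤ l₁ + l₂) :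
    deltaDeg n (k₁ + k₂ - 1) (l₁ + l₂ - 1) ≥
      deltaDeg n k₁ l₁ + deltaDeg n k₂ l₂ - 1 :=
  stmt_1_general n hn k₁ l₁ k₂ l₂
end

section
/- Let a₀, c₀ be nonzero reals, p ≥ 3, n ≥ 3 integers, and consider the linear map L on the space of coefficient vectors (g₀, g₁, …, g_p) ∈ ℝ × ℂ^p defined by the rules: for 1 ≤ k ≤ p−1 the generator χ_k changes (g_k, g_{k+2}) by (g_k + 2 i a₀ n k α_k, g_{k+2} − 2 i n c₀ (p−1−k) α_k) for any α_k ∈ ℂ, and χ₀ changes g₂ by g₂ − 2 i n c₀ (p−1) α₀ for α₀ ∈ ℝ (leaving all other coordinates fixed). Then for every coefficient vector there exists a finite sequence of such elementary transformations after which g_k = 0 for all k ≥ 1 except possibly one index: for even p the surviving data are (g₀ ∈ ℝ real and g₂ ∈ ℝ), and for odd p the surviving data are (g₀ ∈ ℝ and g₁ ∈ ℂ). -/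
/-!
A move `χ_k` with `k ≥ 1` couples only `g_k` and `g_{k+2}`, with coefficients `2 i a₀ n k ≠ 0`
and `−2 i n c₀ (p−1−k)`, nonzero for `k ≤ p − 2`. So the coefficients split into the two parity
chains, which are normalized independently. On the chain of `p − 1`, sweeping upwards, `χ_k` kills
`g_k` and only disturbs `g_{k+2}`, treated next; the top move `χ_{p−1}` disturbs nothing. On the
chain of `p`, sweeping downwards, `χ_{k−2}` kills `g_k` and only disturbs `g_{k−2}`, so everything
is pushed into the bottom entry, `g₂` for even `p` and `g₁` for odd `p`. For even `p` the real
move `χ₀` finally removes `Im g₂`.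
-/

/-- One elementary normalizing transformation on coefficient vectors
`(g₀, g₁, …, g_p)` (indices beyond `p` ignored): either the move generated by
`χ_k` (`1 ≤ k ≤ p−1`, parameter `α ∈ ℂ`), which replaces `g_k` by
`g_k + 2 i a₀ n k α` and `g_{k+2}` by `g_{k+2} − 2 i n c₀ (p−1−k) α`,
or the move generated by `χ₀` (parameter `α₀ ∈ ℝ`), which replaces `g₂` by
`g₂ − 2 i n c₀ (p−1) α₀`. -/
def ElemMove (a₀ c₀ : ℝ) (n p : ℕ) (g g' : ℕ → ℂ) : Prop :=
  (∃ k : ℕ, 1 ≤ k ∧ k ≤ p - 1 ∧ ∃ α : ℂ,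
    (∀ j, j ≠ k → j ≠ k + 2 → g' j = g j) ∧
    g' k = g k + 2 * Complex.I * (a₀ : ℂ) * n * k * α ∧
    (k + 2 ≤ p → g' (k + 2) = g (k + 2) - 2 * Complex.I * n * (c₀ : ℂ) * (p - 1 - k : ℕ) * α) ∧
    (p < k + 2 → g' (k + 2) = g (k + 2))) ∨
  (∃ α₀ : ℝ,
    (∀ j, j ≠ 2 → g' j = g j) ∧
    g' 2 = g 2 - 2 * Complex.I * n * (c₀ : ℂ) * (p - 1 : ℕ) * (α₀ : ℂ))

open Relation Complex

section Sweep

variable {M : Type*} [Zero M] {R : (ℕ → M) → (ℕ → M) → Prop}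

theorem exists_reflTransGen_sweep_up (k m : ℕ)
    (hR : ∀ j, k ≤ j → j < k + 2 * m → j % 2 = k % 2 → ∀ g, ∃ g', R g g' ∧ g' j = 0 ∧
      ∀ l, l ≠ j → l ≠ j + 2 → g' l = g l)
    (g : ℕ → M) :
    ∃ g', ReflTransGen R g g' ∧
      (∀ j, k ≤ j → j < k + 2 * m → j % 2 = k % 2 → g' j = 0) ∧
      ∀ j, j < k ∨ k + 2 * m < j ∨ j % 2 ≠ k % 2 → g' j = g j := by
  induction m with
  | zero => exact ⟨g, .refl, fun j _ _ _ => by omega, fun _ _ => rfl⟩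
  | succ m ih =>
    obtain ⟨g₁, hg₁, hzero₁, hsame₁⟩ := ih fun j h₁ h₂ h₃ => hR j h₁ (by omega) h₃
    obtain ⟨g₂, hg₂, hzero₂, hsame₂⟩ := hR (k + 2 * m) (by omega) (by omega) (by omega) g₁
    refine ⟨g₂, hg₁.tail hg₂, fun j h₁ h₂ h₃ => ?_, fun j hj => ?_⟩
    · rcases eq_or_ne j (k + 2 * m) with rfl | hne
      · exact hzero₂
      · rw [hsame₂ j hne (by omega)]
        exact hzero₁ j h₁ (by omega) h₃
    · rw [hsame₂ j (by omega) (by omega)]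
      exact hsame₁ j (by omega)

theorem exists_reflTransGen_sweep_down (k m : ℕ)
    (hR : ∀ j, k ≤ j → j < k + 2 * m → j % 2 = k % 2 → ∀ g, ∃ g', R g g' ∧ g' (j + 2) = 0 ∧
      ∀ l, l ≠ j → l ≠ j + 2 → g' l = g l)
    (g : ℕ → M) :
    ∃ g', ReflTransGen R g g' ∧
      (∀ j, k < j → j ≤ k + 2 * m → j % 2 = k % 2 → g' j = 0) ∧
      ∀ j, j < k ∨ k + 2 * m < j ∨ j % 2 ≠ k % 2 → g' j = g j := by
  induction m generalizing k g with
  | zero => exact ⟨g, .refl, fun j _ _ _ => by omega, fun _ _ => rfl⟩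
  | succ m ih =>
    obtain ⟨g₁, hg₁, hzero₁, hsame₁⟩ :=
      ih (k + 2) (fun j _ _ _ => hR j (by omega) (by omega) (by omega)) g
    obtain ⟨g₂, hg₂, hzero₂, hsame₂⟩ := hR k le_rfl (by omega) rfl g₁
    refine ⟨g₂, hg₁.tail hg₂, fun j h₁ h₂ h₃ => ?_, fun j hj => ?_⟩
    · rcases eq_or_ne j (k + 2) with rfl | hne
      · exact hzero₂
      · rw [hsame₂ j (by omega) hne]
        exact hzero₁ j (by omega) (by omega) (by omega)
    · rw [hsame₂ j (by omega) (by omega)]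
      exact hsame₁ j (by omega)

end Sweep

section Moves

variable {a₀ c₀ : ℝ} {n p : ℕ}

theorem exists_elemMove_chi {k : ℕ} (hk₁ : 1 ≤ k) (hk : k ≤ p - 1) (α : ℂ) (g : ℕ → ℂ) :
    ∃ g', ElemMove a₀ c₀ n p g g' ∧ g' k = g k + 2 * I * a₀ * n * k * α ∧
      (k + 2 ≤ p → g' (k + 2) = g (k + 2) - 2 * I * n * c₀ * (p - 1 - k : ℕ) * α) ∧
      ∀ j, j ≠ k → j ≠ k + 2 → g' j = g j := by
  set g' := Function.update
    (Function.update g (k + 2)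
      (if k + 2 ≤ p then g (k + 2) - 2 * I * n * c₀ * (p - 1 - k : ℕ) * α else g (k + 2)))
    k (g k + 2 * I * a₀ * n * k * α)
  have hsame : ∀ j, j ≠ k → j ≠ k + 2 → g' j = g j := by
    intro j h₁ h₂
    simp [g', h₁, h₂]
  have hk₂' : ∀ h : k + 2 ≤ p,
      g' (k + 2) = g (k + 2) - 2 * I * n * c₀ * (p - 1 - k : ℕ) * α := by
    intro h
    simp [g', h]
  refine ⟨g', Or.inl ⟨k, hk₁, hk, α, hsame, by simp [g'], hk₂', fun h => ?_⟩,
    by simp [g'], hk₂', hsame⟩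
  simp [g', Nat.not_le.mpr h]

theorem exists_elemMove_eq_zero (ha : a₀ ≠ 0) (hn : n ≠ 0) {k : ℕ} (hk₁ : 1 ≤ k)
    (hk : k ≤ p - 1) (g : ℕ → ℂ) :
    ∃ g', ElemMove a₀ c₀ n p g g' ∧ g' k = 0 ∧ ∀ j, j ≠ k → j ≠ k + 2 → g' j = g j := by
  obtain ⟨g', hmove, hk', -, hsame⟩ := exists_elemMove_chi (a₀ := a₀) (c₀ := c₀) (n := n)
    hk₁ hk (-g k / (2 * I * a₀ * n * k)) g
  refine ⟨g', hmove, ?_, hsame⟩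
  have : (a₀ : ℂ) ≠ 0 := ofReal_ne_zero.mpr ha
  have : (k : ℂ) ≠ 0 := by exact_mod_cast (by omega : k ≠ 0)
  rw [hk']
  field_simp
  ring

theorem exists_elemMove_add_two_eq_zero (hc : c₀ ≠ 0) (hn : n ≠ 0) {k : ℕ} (hk₁ : 1 ≤ k)
    (hk : k + 2 ≤ p) (g : ℕ → ℂ) :
    ∃ g', ElemMove a₀ c₀ n p g g' ∧ g' (k + 2) = 0 ∧ ∀ j, j ≠ k → j ≠ k + 2 → g' j = g j := by
  obtain ⟨g', hmove, -, hk', hsame⟩ := exists_elemMove_chi (a₀ := a₀) (c₀ := c₀) (n := n)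
    (p := p) hk₁ (by omega) (g (k + 2) / (2 * I * n * c₀ * (p - 1 - k : ℕ))) g
  refine ⟨g', hmove, ?_, hsame⟩
  have : (c₀ : ℂ) ≠ 0 := ofReal_ne_zero.mpr hc
  have : ((p - 1 - k : ℕ) : ℂ) ≠ 0 := by exact_mod_cast (by omega : p - 1 - k ≠ 0)
  rw [hk' hk]
  field_simp
  ring

theorem exists_elemMove_im_two_eq_zero (hc : c₀ ≠ 0) (hn : n ≠ 0) (hp : 2 ≤ p) (g : ℕ → ℂ) :
    ∃ g', ElemMove a₀ c₀ n p g g' ∧ (g' 2).im = 0 ∧ ∀ j, j ≠ 2 → g' j = g j := by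
  set α₀ : ℝ := (g 2).im / (2 * n * c₀ * (p - 1 : ℕ))
  have hsame : ∀ j, j ≠ 2 → Function.update g 2 ((g 2).re) j = g j :=
    fun j hj => Function.update_of_ne hj _ _
  refine ⟨Function.update g 2 ((g 2).re), Or.inr ⟨α₀, hsame, ?_⟩, by simp, hsame⟩
  have : ((p - 1 : ℕ) : ℝ) ≠ 0 := by exact_mod_cast (by omega : p - 1 ≠ 0)
  have hα₀ : 2 * n * c₀ * (p - 1 : ℕ) * α₀ = (g 2).im := by
    simp only [α₀]
    field_simp
  calc Function.update g 2 ((g 2).re) 2 = g 2 - (g 2).im * I := by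
        rw [Function.update_self, eq_sub_iff_add_eq, re_add_im]
    _ = _ := by rw [← hα₀]; push_cast; ring

theorem exists_reflTransGen_elemMove_eq_zero (ha : a₀ ≠ 0) (hc : c₀ ≠ 0) (hn : n ≠ 0)
    (g : ℕ → ℂ) :
    ∃ g', ReflTransGen (ElemMove a₀ c₀ n p) g g' ∧ g' 0 = g 0 ∧
      ∀ j, 1 ≤ j → j ≤ p → j ≠ 2 - p % 2 → g' j = 0 := by
  obtain ⟨g₁, hg₁, hzero₁, hsame₁⟩ := exists_reflTransGen_sweep_up (p % 2 + 1) (p / 2)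
    (fun j _ _ _ => exists_elemMove_eq_zero (p := p) ha hn (k := j) (by omega) (by omega)) g
  obtain ⟨g₂, hg₂, hzero₂, hsame₂⟩ := exists_reflTransGen_sweep_down (2 - p % 2) ((p - 1) / 2)
    (fun j _ _ _ => exists_elemMove_add_two_eq_zero (p := p) hc hn (k := j) (by omega)
      (by omega)) g₁
  refine ⟨g₂, hg₁.trans hg₂, by rw [hsame₂ 0 (by omega), hsame₁ 0 (by omega)],
    fun j h₁ h₂ h₃ => ?_⟩
  rcases Nat.mod_two_eq_zero_or_one (j + p) with hj | hj
  · exact hzero₂ j (by omega) (by omega) (by omega)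
  · rw [hsame₂ j (by omega)]
    exact hzero₁ j (by omega) (by omega) (by omega)

end Moves

/-- Every coefficient vector can be reduced by finitely many elementary moves
to one in the normal form: for even `p` only `g₀ ∈ ℝ` and `g₂ ∈ ℝ` survive,
for odd `p` only `g₀ ∈ ℝ` and `g₁ ∈ ℂ` survive. -/
theorem stmt_5 (a₀ c₀ : ℝ) (ha : a₀ ≠ 0) (hc : c₀ ≠ 0) (n p : ℕ)
    (hn : 3 ≤ n) (hp : 3 ≤ p) (g : ℕ → ℂ) (hg0 : (g 0).im = 0) :
    ∃ g' : ℕ → ℂ, Relation.ReflTransGen (ElemMove a₀ c₀ n p) g g' ∧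
      (g' 0).im = 0 ∧
      (Even p →
        ((g' 2).im = 0 ∧ ∀ k, 1 ≤ k → k ≤ p → k ≠ 2 → g' k = 0)) ∧
      (Odd p → ∀ k, 2 ≤ k → k ≤ p → g' k = 0) := by
  obtain ⟨g₁, hg₁, hg₁0, hzero₁⟩ :=
    exists_reflTransGen_elemMove_eq_zero (n := n) (p := p) ha hc (by omega) g
  rcases Nat.even_or_odd p with hp_even | hp_odd
  · have hp_mod := Nat.even_iff.mp hp_even
    obtain ⟨g₂, hg₂, him, hsame⟩ :=
      exists_elemMove_im_two_eq_zero (a₀ := a₀) (n := n) (p := p) hc (by omega) (by omega) g₁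
    refine ⟨g₂, hg₁.tail hg₂, by rw [hsame 0 (by omega), hg₁0, hg0], fun _ => ⟨him, ?_⟩,
      fun h => absurd hp_even (Nat.not_even_iff_odd.mpr h)⟩
    intro k h₁ h₂ h₃
    rw [hsame k h₃]
    exact hzero₁ k h₁ h₂ (by omega)
  · have hp_mod := Nat.odd_iff.mp hp_odd
    refine ⟨g₁, hg₁, by rw [hg₁0, hg0], fun h => absurd h (Nat.not_even_iff_odd.mpr hp_odd),
      fun _ k h₁ h₂ => hzero₁ k (by omega) h₂ (by omega)⟩
end
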